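/- The function m(b) = max(b, 0) : ℝ → ℝ is slantly (Newton) differentiable with slanting function G(b) = 1 if b > 0 and G(b) = 0 if b ≤ 0: for every b, lim_{h→0} |m(b+h) − m(b) − G(b+h)·h| / |h| = 0. -/
import Mathlib


open Filter Topology

theorem max_slantly_differentiable :
    ∀ b : ℝ, Filter.Tendsto
      (fun h : ℝ =>
        |max (b + h) 0 - max b 0 - (if 0 < b + h then (1 : ℝ) else 0) * h| / |h|)
      (𝓝[≠] 0) (𝓝 0) := by
  intro b
  have h0 : ∀ᶠ h in 𝓝[≠] (0:ℝ),
      |max (b + h) 0 - max b 0 - (if 0 < b + h then (1 : ℝ) else 0) * h| / |h| = 0 := by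
    rcases lt_trichotomy b 0 with hb | hb | hb
    · filter_upwards [eventually_nhdsWithin_of_eventually_nhds
        (eventually_abs_sub_lt 0 (by linarith : (0:ℝ) < -b))] with h hh
      have h1 : b + h < 0 := by
        rw [sub_zero] at hh
        rcases abs_lt.mp hh with ⟨_, _⟩; linarith
      rw [if_neg (by linarith), max_eq_right h1.le, max_eq_right hb.le]
      simp
    · subst hb
      filter_upwards with h
      by_cases hh : 0 < h
      · rw [if_pos (by simpa using hh)]
        rw [max_eq_left (by simpa using hh.le)]
        simp
      · rw [if_neg (by simpa using hh), max_eq_right (by simpa using not_lt.mp hh)]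
        simp
    · filter_upwards [eventually_nhdsWithin_of_eventually_nhds
        (eventually_abs_sub_lt 0 hb)] with h hh
      have h1 : 0 < b + h := by
        rw [sub_zero] at hh
        rcases abs_lt.mp hh with ⟨_, _⟩; linarith
      rw [if_pos h1, max_eq_left h1.le, max_eq_left hb.le]
      ring_nf
      simp
  exact Tendsto.congr' (h0.mono fun h hh => hh.symm) tendsto_const_nhds
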